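/- Let F be a finite field whose characteristic is not 3. Then there exist three homogeneous polynomials F₀, F₁, F₂ of degree 3 in MvPolynomial (Fin 3) F, linearly independent over F, such that for every nonzero tuple (a₀,a₁,a₂) ∈ F³ the plane cubic f = a₀•F₀ + a₁•F₁ + a₂•F₂ is smooth: for every point (u₀,u₁,u₂) ∈ (AlgebraicClosure F)³ with (u₀,u₁,u₂) ≠ (0,0,0) at which the image f̄ of f in MvPolynomial (Fin 3) (AlgebraicClosure F) evaluates to 0, at least one of the three partial derivatives MvPolynomial.pderiv i f̄ (i = 0,1,2) evaluates to a nonzero value at (u₀,u₁,u₂). -/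

import Mathlib

/-! Let `K/F` be the cubic extension and `b` a basis of `K` over `F`. For `α ∈ K`, taking the trace
`K → F` coefficientwise turns `α • (b₀ x + b₁ y + b₂ z)³` into a cubic form over `F`. Over `F̄` it
becomes `∑_τ τ(α) ℓ_τ³`, the sum running over the three embeddings `τ : K → F̄`, with
`ℓ_τ = τ(b₀) x + τ(b₁) y + τ(b₂) z`. The matrix `(τ(bₖ))` is invertible, its squared determinant
being the discriminant of `b`, which is nonzero as `K/F` is separable. Hence for `α ≠ 0` the form is
diagonal in the coordinates `ℓ_τ` with nonzero coefficients, and such a form has no singular point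
when `3 ≠ 0`. A nonzero combination of the forms attached to `b₀, b₁, b₂` is the form attached to
some `α ≠ 0`, hence nonsingular and in particular nonzero. -/

open MvPolynomial Matrix

namespace MvPolynomial

section LinearForm

variable {σ ι R : Type*} [CommRing R] [Fintype σ]

noncomputable def linearForm (v : σ → R) : MvPolynomial σ R := ∑ k, C (v k) * X k

theorem eval_linearForm (v u : σ → R) : eval u (linearForm v) = v ⬝ᵥ u := by
  simp [linearForm, dotProduct]

theorem pderiv_linearForm [DecidableEq σ] (v : σ → R) (i : σ) :
    pderiv i (linearForm v) = C (v i) := by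
  simp [linearForm, pderiv_X, Pi.single_apply]

theorem map_linearForm {S : Type*} [CommRing S] (f : R →+* S) (v : σ → R) :
    map f (linearForm v) = linearForm (f ∘ v) := by
  simp [linearForm]

theorem isHomogeneous_linearForm (v : σ → R) : (linearForm v).IsHomogeneous 1 :=
  IsHomogeneous.sum _ _ _ fun k _ => by
    simpa using (isHomogeneous_C σ (v k)).mul (isHomogeneous_X R k)

noncomputable def diagonalForm [Fintype ι] (V : Matrix ι σ R) (A : ι → R) (d : ℕ) :
    MvPolynomial σ R :=
  ∑ j, C (A j) * linearForm (V j) ^ d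

theorem eval_pderiv_diagonalForm [DecidableEq σ] [Fintype ι] (V : Matrix ι σ R) (A : ι → R)
    (d : ℕ) (u : σ → R) (i : σ) :
    eval u (pderiv i (diagonalForm V A d)) =
      ((fun j => A j * d * (V *ᵥ u) j ^ (d - 1)) ᵥ* V) i := by
  simp [diagonalForm, pderiv_linearForm, eval_linearForm, vecMul, dotProduct, mulVec, mul_assoc]

theorem eq_zero_of_forall_eval_pderiv_diagonalForm_eq_zero {E : Type*} [Field E]
    [DecidableEq σ] {V : Matrix σ σ E} (hV : IsUnit V) {A : σ → E} (hA : ∀ j, A j ≠ 0) {d : ℕ}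
    (hd : (d : E) ≠ 0) {u : σ → E} (hu : ∀ i, eval u (pderiv i (diagonalForm V A d)) = 0) :
    u = 0 := by
  simp only [eval_pderiv_diagonalForm] at hu
  have hw : (fun j => A j * d * (V *ᵥ u) j ^ (d - 1)) = 0 :=
    vecMul_injective_iff_isUnit.2 hV (by ext i; simpa using hu i)
  have hVu : V *ᵥ u = 0 := by
    ext j
    exact eq_zero_of_pow_eq_zero <|
      (mul_eq_zero.1 (congrFun hw j)).resolve_left (mul_ne_zero (hA j) hd)
  exact mulVec_injective_iff_isUnit.2 hV (by simpa using hVu)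

end LinearForm

section TraceCoeffs

variable {σ : Type*} (F K : Type*) [Field F] [Field K] [Algebra F K]

noncomputable def traceCoeffs : MvPolynomial σ K →ₗ[F] MvPolynomial σ F where
  toFun p := AddMonoidAlgebra.map (Algebra.trace F K).toAddMonoidHom p
  map_add' := AddMonoidAlgebra.map_add _
  map_smul' a p := by ext m; simp [coeff_smul]

variable {F K}

@[simp]
theorem coeff_traceCoeffs (p : MvPolynomial σ K) (m : σ →₀ ℕ) :
    coeff m (traceCoeffs F K p) = Algebra.trace F K (coeff m p) := rfl

theorem IsHomogeneous.traceCoeffs {p : MvPolynomial σ K} {n : ℕ} (hp : p.IsHomogeneous n) :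
    (traceCoeffs F K p).IsHomogeneous n := fun m hm =>
  hp fun h => hm (by rw [coeff_traceCoeffs, h, map_zero])

theorem map_traceCoeffs (E : Type*) [Field E] [Algebra F E] [IsAlgClosed E]
    [FiniteDimensional F K] [Algebra.IsSeparable F K] (p : MvPolynomial σ K) :
    map (algebraMap F E) (traceCoeffs F K p) = ∑ τ : K →ₐ[F] E, map (τ : K →+* E) p := by
  ext m
  simp [coeff_map, coeff_sum, trace_eq_sum_embeddings]

end TraceCoeffs

end MvPolynomial

section TracePowForm

variable {F K ι : Type*} [Field F] [Field K] [Algebra F K] [Fintype ι]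

noncomputable def tracePowForm (b : Module.Basis ι F K) (d : ℕ) : K →ₗ[F] MvPolynomial ι F where
  toFun α := traceCoeffs F K (C α * linearForm b ^ d)
  map_add' α β := by rw [C_add, add_mul, map_add]
  map_smul' a α := by
    rw [Algebra.smul_def, C_mul, mul_assoc, ← MvPolynomial.algebraMap_apply, ← Algebra.smul_def,
      map_smul, RingHom.id_apply]

theorem tracePowForm_apply (b : Module.Basis ι F K) (d : ℕ) (α : K) :
    tracePowForm b d α = traceCoeffs F K (C α * linearForm b ^ d) := rfl

theorem isHomogeneous_tracePowForm (b : Module.Basis ι F K) (d : ℕ) (α : K) :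
    (tracePowForm b d α).IsHomogeneous d := by
  rw [tracePowForm_apply]
  simpa using ((isHomogeneous_C ι α).mul ((isHomogeneous_linearForm b).pow d)).traceCoeffs

variable [FiniteDimensional F K] [Algebra.IsSeparable F K]
  (E : Type*) [Field E] [Algebra F E] [IsAlgClosed E]

theorem map_tracePowForm (b : Module.Basis ι F K) (d : ℕ) (α : K) :
    map (algebraMap F E) (tracePowForm b d α) =
      ∑ τ : K →ₐ[F] E, C (τ α) * linearForm (τ ∘ b) ^ d := by
  simp [tracePowForm_apply, map_traceCoeffs, map_linearForm]

theorem isUnit_embeddingsMatrixReindex [DecidableEq ι] (b : Module.Basis ι F K)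
    (e : ι ≃ (K →ₐ[F] E)) : IsUnit (Algebra.embeddingsMatrixReindex F E b e) := by
  rw [Matrix.isUnit_iff_isUnit_det, isUnit_iff_ne_zero, ← pow_ne_zero_iff two_ne_zero,
    ← Algebra.discr_eq_det_embeddingsMatrixReindex_pow_two]
  exact (map_ne_zero _).2 (Algebra.discr_not_zero_of_basis F b)

theorem eq_zero_of_forall_eval_pderiv_map_tracePowForm_eq_zero [DecidableEq ι]
    (b : Module.Basis ι F K) {d : ℕ} (hd : (d : F) ≠ 0) {α : K} (hα : α ≠ 0) {u : ι → E}
    (hu : ∀ i, eval u (pderiv i (map (algebraMap F E) (tracePowForm b d α))) = 0) : u = 0 := by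
  let e : ι ≃ (K →ₐ[F] E) :=
    Fintype.equivOfCardEq (by rw [AlgHom.card, Module.finrank_eq_card_basis b])
  rw [map_tracePowForm, ← e.sum_comp] at hu
  exact eq_zero_of_forall_eval_pderiv_diagonalForm_eq_zero
    ((Matrix.isUnit_transpose _).2 (isUnit_embeddingsMatrixReindex E b e))
    (A := fun j => e j α) (fun j => (map_ne_zero _).2 hα)
    (by simpa using (algebraMap F E).injective.ne hd) hu

theorem ker_tracePowForm (b : Module.Basis ι F K) {d : ℕ} (hd : (d : F) ≠ 0) :
    LinearMap.ker (tracePowForm b d) = ⊥ := by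
  classical
  refine LinearMap.ker_eq_bot'.2 fun α hα => by_contra fun hα' => ?_
  obtain ⟨i⟩ := b.index_nonempty
  -- the zero form is singular everywhere, in particular at a nonzero point
  have := eq_zero_of_forall_eval_pderiv_map_tracePowForm_eq_zero (AlgebraicClosure F) b hd hα'
    (u := Pi.single i 1) (by simp [hα])
  simpa using congrFun this i

end TracePowForm

theorem stmt_10 (F : Type*) [Field F] [Fintype F] (hchar : ringChar F ≠ 3) :
    ∃ F₀ F₁ F₂ : MvPolynomial (Fin 3) F,
      F₀.IsHomogeneous 3 ∧ F₁.IsHomogeneous 3 ∧ F₂.IsHomogeneous 3 ∧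
      LinearIndependent F ![F₀, F₁, F₂] ∧
      ∀ a : Fin 3 → F, a ≠ 0 →
        ∀ u : Fin 3 → AlgebraicClosure F, u ≠ 0 →
          MvPolynomial.eval u (MvPolynomial.map (algebraMap F (AlgebraicClosure F))
            (a 0 • F₀ + a 1 • F₁ + a 2 • F₂)) = 0 →
          ∃ i : Fin 3, MvPolynomial.eval u (MvPolynomial.pderiv i
            (MvPolynomial.map (algebraMap F (AlgebraicClosure F))
              (a 0 • F₀ + a 1 • F₁ + a 2 • F₂))) ≠ 0 := by
  obtain ⟨p, _⟩ := CharP.exists F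
  have : Fact p.Prime := ⟨CharP.char_is_prime F p⟩
  let K := FiniteField.Extension F p 3
  let b : Module.Basis (Fin 3) F K :=
    Module.finBasisOfFinrankEq F K (FiniteField.finrank_extension F p 3)
  let Φ := tracePowForm b 3
  have h3 : ((3 : ℕ) : F) ≠ 0 := by
    rw [Ne, ringChar.spec]
    intro hdvd
    rcases Nat.prime_three.eq_one_or_self_of_dvd _ hdvd with h | h
    exacts [CharP.ringChar_ne_one h, hchar h]
  refine ⟨Φ (b 0), Φ (b 1), Φ (b 2), isHomogeneous_tracePowForm .., isHomogeneous_tracePowForm ..,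
    isHomogeneous_tracePowForm .., ?_, ?_⟩
  · have hvec : ![Φ (b 0), Φ (b 1), Φ (b 2)] = Φ ∘ b := by
      ext i : 1
      fin_cases i <;> rfl
    rw [hvec]
    exact b.linearIndependent.map' Φ (ker_tracePowForm b h3)
  · intro a ha u hu _
    have hsum : a 0 • Φ (b 0) + a 1 • Φ (b 1) + a 2 • Φ (b 2) = Φ (b.equivFun.symm a) := by
      simp [Module.Basis.equivFun_symm_apply, Fin.sum_univ_three]
    rw [hsum]
    by_contra! hsing
    exact hu (eq_zero_of_forall_eval_pderiv_map_tracePowForm_eq_zero _ b h3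
      (b.equivFun.symm.map_ne_zero_iff.2 ha) hsing)
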